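/- Let m be an even positive integer and let 𝒞 be the order m dimension n symmetric Cauchy tensor with generating vector c ∈ ℝ^n. Then 𝒞 is positive definite if and only if the entries c_1,…,c_n are positive and mutually distinct (c_i > 0 for all i and c_i ≠ c_j for i ≠ j). -/

import Mathlib

/-!
For `c > 0`, writing `1 / s = ∫₀¹ t ^ (s - 1) dt` and expanding the `m`-th power turns the form
`𝒞xᵐ` into `∫₀¹ (∑ᵢ xᵢ t ^ cᵢ) ^ m dt / t`, which is nonnegative for even `m`. It is positive
unless the generalized polynomial `∑ᵢ xᵢ t ^ cᵢ` vanishes on `(0, 1)`, and distinct exponents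
rule that out: near `0` the term with the lowest exponent among those with `xᵢ ≠ 0` dominates.
Conversely, `x = eᵢ` gives `𝒞xᵐ = 1 / (m cᵢ)`, so `cᵢ > 0`, and if `cᵢ = cⱼ` then
`x = eᵢ - eⱼ` gives `𝒞xᵐ = (∑ₖ xₖ) ^ m / (m cᵢ) = 0`.
-/

open Filter Function MeasureTheory Set Topology intervalIntegral
open scoped Interval

theorem intervalIntegral_pos_of_continuousAt {f : ℝ → ℝ} {a b t₀ : ℝ}
    (hfi : IntervalIntegrable f volume a b) (hf : ∀ t ∈ Ioo a b, 0 ≤ f t) (ht₀ : t₀ ∈ Ioo a b)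
    (hcont : ContinuousAt f t₀) (hpos : 0 < f t₀) : 0 < ∫ t in a..b, f t := by
  have hab : a < b := ht₀.1.trans ht₀.2
  obtain ⟨l, u, hlu, hsub⟩ := mem_nhds_iff_exists_Ioo_subset.mp
    ((hcont.eventually (lt_mem_nhds hpos)).and (isOpen_Ioo.mem_nhds ht₀))
  have hf_ae : 0 ≤ᵐ[volume.restrict (Ι a b)] f := by
    rw [EventuallyLE, uIoc_of_le hab.le]
    refine ae_restrict_of_ae_eq_of_ae_restrict Ioo_ae_eq_Ioc ?_
    rw [ae_restrict_iff' measurableSet_Ioo]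
    exact ae_of_all _ hf
  rw [integral_pos_iff_support_of_nonneg_ae' hf_ae hfi]
  refine ⟨hab, ((Measure.measure_Ioo_pos _).mpr (hlu.1.trans hlu.2)).trans_le (measure_mono ?_)⟩
  exact fun t ht => ⟨(hsub ht).1.ne', Ioo_subset_Ioc_self (hsub ht).2⟩

theorem tendsto_rpow_nhdsGT_zero {p : ℝ} (hp : 0 < p) :
    Tendsto (fun t : ℝ => t ^ p) (𝓝[>] 0) (𝓝 0) := by
  simpa [Real.zero_rpow hp.ne'] using
    (Real.continuousAt_rpow_const 0 p (Or.inr hp.le)).tendsto.mono_left nhdsWithin_le_nhds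

theorem integral_rpow_sub_one_zero_one {s : ℝ} (hs : 0 < s) :
    ∫ t in (0 : ℝ)..1, t ^ (s - 1) = s⁻¹ := by
  rw [integral_rpow (Or.inl (by linarith))]
  simp [Real.zero_rpow hs.ne', one_div]

variable {ι : Type*}

theorem sum_comp_pos {m : ℕ} (hm : 0 < m) {c : ι → ℝ} (hc : ∀ i, 0 < c i) (f : Fin m → ι) :
    0 < ∑ j, c (f j) :=
  haveI : Nonempty (Fin m) := ⟨⟨0, hm⟩⟩
  Finset.sum_pos (fun _ _ => hc _) Finset.univ_nonempty

variable [Fintype ι]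

noncomputable def cauchyForm (m : ℕ) (c x : ι → ℝ) : ℝ :=
  ∑ i : Fin m → ι, (∏ j, x (i j)) / (∑ j, c (i j))

theorem cauchyForm_eq_of_const_on_support {m : ℕ} {c x : ι → ℝ} {γ : ℝ}
    (hcx : ∀ k, x k ≠ 0 → c k = γ) : cauchyForm m c x = (∑ k, x k) ^ m / (m * γ) := by
  rw [Fintype.sum_pow, Finset.sum_div]
  refine Finset.sum_congr rfl fun f _ => ?_
  by_cases hf : ∏ j, x (f j) = 0
  · simp [hf]
  · have hcf (j : Fin m) : c (f j) = γ :=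
      hcx _ fun h => hf (Finset.prod_eq_zero (Finset.mem_univ j) h)
    simp [hcf]

theorem cauchyForm_single [DecidableEq ι] (m : ℕ) (c : ι → ℝ) (i : ι) :
    cauchyForm m c (Pi.single i 1) = (m * c i)⁻¹ := by
  rw [cauchyForm_eq_of_const_on_support (γ := c i) fun k hk => by
    rw [Pi.single_apply] at hk; simp_all]
  simp

theorem cauchyForm_single_sub_single [DecidableEq ι] {m : ℕ} (hm : m ≠ 0) {c : ι → ℝ} {i j : ι}
    (hc : c i = c j) : cauchyForm m c (Pi.single i 1 - Pi.single j 1) = 0 := by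
  rw [cauchyForm_eq_of_const_on_support (γ := c i) fun k hk => ?_]
  · simp [hm]
  · by_cases hki : k = i
    · rw [hki]
    · by_cases hkj : k = j
      · rw [hkj, hc]
      · simp [hki, hkj] at hk

theorem sum_mul_rpow_pow_div_self {t : ℝ} (ht : 0 < t) (m : ℕ) (c x : ι → ℝ) :
    (∑ i, x i * t ^ c i) ^ m / t = ∑ f : Fin m → ι, (∏ j, x (f j)) * t ^ (∑ j, c (f j) - 1) := by
  rw [Fintype.sum_pow, Finset.sum_div]
  refine Finset.sum_congr rfl fun f _ => ?_
  rw [Finset.prod_mul_distrib, ← Real.rpow_sum_of_pos ht, Real.rpow_sub_one ht.ne', mul_div_assoc]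

theorem intervalIntegrable_sum_mul_rpow_pow_div_self {m : ℕ} (hm : 0 < m) {c : ι → ℝ}
    (hc : ∀ i, 0 < c i) (x : ι → ℝ) :
    IntervalIntegrable (fun t => (∑ i, x i * t ^ c i) ^ m / t) volume 0 1 := by
  have hF : IntervalIntegrable
      (fun t => ∑ f : Fin m → ι, (∏ j, x (f j)) * t ^ (∑ j, c (f j) - 1)) volume 0 1 := by
    simpa only [Finset.sum_fn] using IntervalIntegrable.sum Finset.univ fun f _ =>
      (intervalIntegrable_rpow' (by linarith [sum_comp_pos hm hc f])).const_mul (∏ j, x (f j))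
  refine hF.congr fun t ht => ?_
  rw [uIoc_of_le zero_le_one] at ht
  exact (sum_mul_rpow_pow_div_self ht.1 m c x).symm

theorem cauchyForm_eq_integral {m : ℕ} (hm : 0 < m) {c : ι → ℝ} (hc : ∀ i, 0 < c i)
    (x : ι → ℝ) : cauchyForm m c x = ∫ t in (0 : ℝ)..1, (∑ i, x i * t ^ c i) ^ m / t := by
  have hint (f : Fin m → ι) : IntervalIntegrable
      (fun t : ℝ => (∏ j, x (f j)) * t ^ (∑ j, c (f j) - 1)) volume 0 1 :=
    (intervalIntegrable_rpow' (by linarith [sum_comp_pos hm hc f])).const_mul _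
  calc cauchyForm m c x
      = ∑ f : Fin m → ι, ∫ t in (0 : ℝ)..1, (∏ j, x (f j)) * t ^ (∑ j, c (f j) - 1) := by
        refine Finset.sum_congr rfl fun f _ => ?_
        rw [intervalIntegral.integral_const_mul,
          integral_rpow_sub_one_zero_one (sum_comp_pos hm hc f), div_eq_mul_inv]
    _ = ∫ t in (0 : ℝ)..1, ∑ f : Fin m → ι, (∏ j, x (f j)) * t ^ (∑ j, c (f j) - 1) :=
        (integral_finsetSum fun f _ => hint f).symm
    _ = _ := integral_congr_ae (ae_of_all _ fun t ht => by
        rw [uIoc_of_le zero_le_one] at ht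
        exact (sum_mul_rpow_pow_div_self ht.1 m c x).symm)

theorem eventually_sum_mul_rpow_ne_zero {c : ι → ℝ} (hc : Injective c) {x : ι → ℝ}
    (hx : x ≠ 0) :
    ∀ᶠ t in 𝓝[>] 0, ∑ i, x i * t ^ c i ≠ 0 := by
  classical
  obtain ⟨i₀, hi₀, hmin⟩ := (Finset.univ.filter (x · ≠ 0)).exists_min_image c
    (by simpa [Finset.filter_nonempty_iff, Function.ne_iff] using hx)
  simp only [Finset.mem_filter, Finset.mem_univ, true_and] at hi₀ hmin
  have hlim : Tendsto (fun t : ℝ => ∑ i, x i * t ^ (c i - c i₀)) (𝓝[>] 0) (𝓝 (x i₀)) := by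
    have hterm (i : ι) : Tendsto (fun t : ℝ => x i * t ^ (c i - c i₀)) (𝓝[>] 0)
        (𝓝 (if i = i₀ then x i₀ else 0)) := by
      split_ifs with hi
      · subst hi
        simp
      · by_cases hxi : x i = 0
        · simp [hxi]
        · have hp : 0 < c i - c i₀ := sub_pos.2 ((hmin i hxi).lt_of_ne (hc.ne (Ne.symm hi)))
          simpa using (tendsto_rpow_nhdsGT_zero hp).const_mul (x i)
    simpa using tendsto_finsetSum Finset.univ fun i _ => hterm i
  filter_upwards [hlim.eventually_ne hi₀, self_mem_nhdsWithin] with t ht (htpos : 0 < t)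
  have : ∑ i, x i * t ^ c i = t ^ c i₀ * ∑ i, x i * t ^ (c i - c i₀) := by
    rw [Finset.mul_sum]
    refine Finset.sum_congr rfl fun i _ => ?_
    rw [Real.rpow_sub htpos]
    field_simp
  rw [this]
  exact mul_ne_zero (Real.rpow_pos_of_pos htpos _).ne' ht

theorem cauchyForm_pos {m : ℕ} (hm : 0 < m) (hme : Even m) {c : ι → ℝ} (hc : ∀ i, 0 < c i)
    (hinj : Injective c) {x : ι → ℝ} (hx : x ≠ 0) : 0 < cauchyForm m c x := by
  obtain ⟨t₀, hg, ht₀⟩ :=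
    ((eventually_sum_mul_rpow_ne_zero hinj hx).and (Ioo_mem_nhdsGT zero_lt_one)).exists
  rw [cauchyForm_eq_integral hm hc]
  refine intervalIntegral_pos_of_continuousAt
    (intervalIntegrable_sum_mul_rpow_pow_div_self hm hc x)
    (fun t ht => div_nonneg (hme.pow_nonneg _) ht.1.le) ht₀ ?_ (div_pos (hme.pow_pos hg) ht₀.1)
  have ht₀ne : t₀ ≠ 0 := ht₀.1.ne'
  fun_prop (disch := simp [ht₀ne])

theorem cauchy_tensor_pd_iff_pos_distinct_general
    (m n : ℕ) (hm : 0 < m) (hme : Even m) (c : Fin n → ℝ) :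
    (∀ x : Fin n → ℝ, x ≠ 0 →
        0 < ∑ i : Fin m → Fin n, (∏ j, x (i j)) / (∑ j, c (i j))) ↔
      ((∀ i, 0 < c i) ∧ ∀ i j, i ≠ j → c i ≠ c j) := by
  refine ⟨fun hpd => ⟨fun i => ?_, fun i j hij hcij => ?_⟩, fun ⟨hc, hdist⟩ x hx => ?_⟩
  · have h := hpd (Pi.single i 1) (Pi.single_ne_zero_iff.mpr one_ne_zero)
    rw [← cauchyForm, cauchyForm_single, inv_pos] at h
    exact pos_of_mul_pos_right h m.cast_nonneg
  · have hx : (Pi.single i 1 - Pi.single j 1 : Fin n → ℝ) ≠ 0 :=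
      fun h => by simpa [hij] using congr_fun h i
    have h := hpd _ hx
    rw [← cauchyForm, cauchyForm_single_sub_single hm.ne' hcij] at h
    exact h.false
  · exact cauchyForm_pos hm hme hc (fun i j h => not_imp_not.mp (hdist i j) h) hx

/-- An even order symmetric Cauchy tensor is positive definite iff the
entries of its generating vector are positive and mutually distinct. -/
theorem cauchy_tensor_pd_iff_pos_distinct
    (m n : ℕ) (hm : 0 < m) (hme : Even m) (c : Fin n → ℝ)
    (hc : ∀ i : Fin m → Fin n, (∑ j, c (i j)) ≠ 0) :
    (∀ x : Fin n → ℝ, x ≠ 0 →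
        0 < ∑ i : Fin m → Fin n, (∏ j, x (i j)) / (∑ j, c (i j))) ↔
      ((∀ i, 0 < c i) ∧ ∀ i j, i ≠ j → c i ≠ c j) :=
  cauchy_tensor_pd_iff_pos_distinct_general m n hm hme c
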